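/- arXiv:math/0606743 — 2 statements merged into one kernel-verified Lean document; each statement's English description precedes it below -/
import Mathlib

section
/- Let α ≥ 1 and n ≥ 0 be integers, and let A be the (n+1)×(n+1) matrix with rational entries A_{j,m} = 1/F_{α+j+m} for 0 ≤ j, m ≤ n. Then A is invertible and every entry of A⁻¹ is an integer (i.e., A⁻¹ is the image of an integer matrix); in particular, for k = 1 and α = 1 this recovers Richardson's theorem that the inverse of the Filbert matrix (1/F_{i+j+1}) has only integer entries. -/
/-!
Binet's formula `F x * (φ - ψ) = φ ^ x - ψ ^ x`, with `φ + ψ = k` and `φ * ψ = -1`, puts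
every product of `n` shifted copies `x ↦ F (c + x)` in the span of the `n + 1` exponentials
`x ↦ (φ ^ a * ψ ^ (n - a)) ^ x`. Their bases are distinct, so by Vandermonde an element of
this span that vanishes at `n + 1` consecutive integers is zero. This yields an `F`-analogue
of Lagrange interpolation. Write `P i = ∏_{t ≤ n} F (α + i + t)`,
`L m x = ∏_{t ≤ n, t ≠ m} F (x + t)` and `N i x = ∏_{t ≤ n, t ≠ i} F (x - t)`
(`shiftProd`, `shiftProdErase`, `nodeProd`), and put
`B i m = P i * N i (-α - m) / (N i i * L m (-m))`. Then
`∑ₘ B i m * L m (α + x) - P i / N i i * N i x` vanishes at `x = -α - m` for `m ≤ n`, where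
only the `m`-th term of the sum survives, hence everywhere; at `x = j` this reads
`(B * A) i j = δ i j`.

Up to sign, `N i i` and `L m (-m)` are products `[i]! * [n - i]!` of fibonorials
`[r]! = F 1 ⋯ F r`. By the addition formula `[r]!` divides every product of `r` consecutive
values `F a ⋯ F (a + r - 1)` with `a ≥ 0`, and splitting `P i` and `N i (-α - m)` into such
runs shows that `B i m` is an integer.
-/

open Finset

theorem eq_of_linear_recurrence {R : Type*} [CommRing R] {c : R} {G H : ℤ → R}
    (hG : ∀ n, G (n + 1) = c * G n + G (n - 1)) (hH : ∀ n, H (n + 1) = c * H n + H (n - 1))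
    (h₀ : G 0 = H 0) (h₁ : G 1 = H 1) : G = H := by
  suffices ∀ n, G n = H n ∧ G (n + 1) = H (n + 1) from funext fun n ↦ (this n).1
  intro n
  induction n using Int.induction_on with
  | zero => exact ⟨h₀, h₁⟩
  | succ n ih =>
    refine ⟨ih.2, ?_⟩
    rw [hG, hH, add_sub_cancel_right, ih.1, ih.2]
  | pred n ih =>
    refine ⟨?_, by rw [sub_add_cancel]; exact ih.1⟩
    have hG' := hG (-n)
    have hH' := hH (-n)
    rw [← ih.1, ← ih.2] at hH'
    linear_combination hH' - hG'

theorem Finset.prod_range_succ_erase {M : Type*} [CommMonoid M] (f : ℕ → M) {n i : ℕ}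
    (hi : i ≤ n) :
    ∏ t ∈ (range (n + 1)).erase i, f t =
      (∏ t ∈ range i, f t) * ∏ t ∈ range (n - i), f (i + 1 + t) := by
  have hset : (range (n + 1)).erase i = range i ∪ Ico (i + 1) (n + 1) := by
    ext t
    simp only [mem_erase, mem_range, mem_union, mem_Ico]
    omega
  rw [hset, prod_union (disjoint_left.2 fun t ht ht' ↦ by simp at ht ht'; omega),
    prod_Ico_eq_prod_range, Nat.add_sub_add_right]

section ExpSpan

variable {K : Type*} [Field K]

def expSpan (φ ψ : K) (n : ℕ) : Submodule K (ℤ → K) :=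
  Submodule.span K
    (Set.range fun a : Fin (n + 1) ↦ fun x : ℤ ↦ (φ ^ (a : ℕ) * ψ ^ (n - a)) ^ x)

theorem one_mem_expSpan_zero (φ ψ : K) : 1 ∈ expSpan φ ψ 0 :=
  Submodule.subset_span ⟨0, funext fun x ↦ by simp⟩

theorem expSpan_mul_le (φ ψ : K) (m n : ℕ) :
    expSpan φ ψ m * expSpan φ ψ n ≤ expSpan φ ψ (m + n) := by
  rw [expSpan, expSpan, Submodule.span_mul_span, Submodule.span_le, Set.mul_subset_iff]
  rintro _ ⟨a, rfl⟩ _ ⟨b, rfl⟩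
  refine Submodule.subset_span ⟨⟨a + b, by omega⟩, funext fun x ↦ ?_⟩
  show (φ ^ (a + b : ℕ) * ψ ^ (m + n - (a + b : ℕ))) ^ x = _
  rw [Pi.mul_apply, ← mul_zpow, show m + n - (a + b : ℕ) = (m - a) + (n - b) by omega]
  congr 1
  ring

theorem prod_mem_expSpan {φ ψ : K} {ι : Type*} (s : Finset ι) {g : ι → ℤ → K}
    (hg : ∀ t ∈ s, g t ∈ expSpan φ ψ 1) : ∏ t ∈ s, g t ∈ expSpan φ ψ #s := by
  induction s using Finset.cons_induction with
  | empty => exact one_mem_expSpan_zero φ ψ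
  | cons t s ht ih =>
    rw [prod_cons, card_cons, add_comm]
    exact expSpan_mul_le φ ψ 1 #s <| Submodule.mul_mem_mul (hg t (mem_cons_self t s))
      (ih fun u hu ↦ hg u (mem_cons_of_mem hu))

theorem eq_zero_of_mem_span_zpow {n : ℕ} {μ : Fin n → K} (hμ : Function.Injective μ)
    (hμ₀ : ∀ a, μ a ≠ 0) {f : ℤ → K}
    (hf : f ∈ Submodule.span K (Set.range fun a x ↦ μ a ^ x))
    {x₀ : ℤ} (hzero : ∀ t : Fin n, f (x₀ + t) = 0) : f = 0 := by
  obtain ⟨c, rfl⟩ := (Submodule.mem_span_range_iff_exists_fun K).1 hf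
  have hc : (fun a ↦ c a * μ a ^ x₀) = 0 :=
    Matrix.eq_zero_of_forall_pow_sum_mul_pow_eq_zero hμ fun t ↦ by
      rw [← hzero t]
      simp [Finset.sum_apply, zpow_add₀ (hμ₀ _), mul_assoc]
  have : c = 0 := funext fun a ↦ by simpa [hμ₀ a, zpow_ne_zero] using congrFun hc a
  simp [this]

end ExpSpan

theorem injective_pow_mul_pow {φ ψ : ℝ} (hprod : φ * ψ = -1) (hsum : φ + ψ ≠ 0)
    (n : ℕ) :
    Function.Injective fun a : Fin (n + 1) ↦ φ ^ (a : ℕ) * ψ ^ (n - a) := by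
  have hφ : φ ≠ 0 := by rintro rfl; simp at hprod
  have hψ : ψ ≠ 0 := by rintro rfl; simp at hprod
  have hgeom (a : Fin (n + 1)) :
      φ ^ (a : ℕ) * ψ ^ (n - a) = ψ ^ n * (φ / ψ) ^ (a : ℕ) := by
    rw [← pow_sub_mul_pow ψ (Nat.le_of_lt_succ a.isLt), div_pow]
    field_simp
  have hr : |φ / ψ| ≠ 1 := by
    rw [abs_div, Ne, div_eq_one_iff_eq (abs_ne_zero.2 hψ)]
    intro h
    rcases abs_eq_abs.1 h with h | h
    · rw [h] at hprod
      nlinarith [mul_self_nonneg ψ]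
    · exact hsum (by rw [h]; ring)
  intro a b hab
  simp only [hgeom] at hab
  have := congrArg abs (mul_left_cancel₀ (pow_ne_zero n hψ) hab)
  simp only [abs_pow] at this
  exact Fin.ext (pow_right_injective₀ (abs_pos.2 (div_ne_zero hφ hψ)) hr this)

theorem exists_add_eq_mul_eq_neg_one (k : ℝ) : ∃ φ ψ : ℝ, φ + ψ = k ∧ φ * ψ = -1 := by
  have hs : √(k ^ 2 + 4) ^ 2 = k ^ 2 + 4 := Real.sq_sqrt (by positivity)
  exact ⟨(k + √(k ^ 2 + 4)) / 2, (k - √(k ^ 2 + 4)) / 2, by ring,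
    by linear_combination (-1 / 4 : ℝ) * hs⟩

structure IsKFibonacci (k : ℤ) (F : ℤ → ℤ) : Prop where
  zero : F 0 = 0
  one : F 1 = 1
  succ : ∀ n, F (n + 1) = k * F n + F (n - 1)

def fibonorial (F : ℤ → ℤ) (r : ℕ) : ℤ := ∏ t ∈ range r, F (t + 1)

section HankelInverse

variable (F : ℤ → ℤ) (n : ℕ)

def shiftProd (x : ℤ) : ℤ := ∏ t ∈ range (n + 1), F (x + t)

def shiftProdErase (m : ℕ) (x : ℤ) : ℤ := ∏ t ∈ (range (n + 1)).erase m, F (x + t)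

def nodeProd (i : ℕ) (x : ℤ) : ℤ := ∏ t ∈ (range (n + 1)).erase i, F (x - t)

/-- Integer division, exact by `IsKFibonacci.hankelInvEntry_dvd`. -/
def hankelInvEntry (α : ℤ) (i m : ℕ) : ℤ :=
  shiftProd F n (α + i) * nodeProd F n i (-α - m) / (nodeProd F n i i * shiftProdErase F n m (-m))

end HankelInverse

namespace IsKFibonacci

variable {k : ℤ} {F : ℤ → ℤ} (hF : IsKFibonacci k F)
include hF

theorem neg_one : F (-1) = 1 := by
  have := hF.succ 0
  simp only [zero_add, hF.zero, hF.one, mul_zero, zero_sub] at this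
  exact this.symm

theorem add (a b : ℤ) : F (a + b) = F (a + 1) * F b + F a * F (b - 1) := by
  have := eq_of_linear_recurrence (c := k) (G := fun b ↦ F (a + b))
    (H := fun b ↦ F (a + 1) * F b + F a * F (b - 1))
    (fun b ↦ by simpa only [add_assoc, add_sub_assoc] using hF.succ (a + b))
    (fun b ↦ by
      have h := hF.succ (b - 1)
      rw [sub_add_cancel] at h
      rw [hF.succ b, add_sub_cancel_right]
      linear_combination F a * h)
    (by simp [hF.zero, hF.neg_one]) (by simp [hF.zero, hF.one])
  exact congrFun this b

theorem neg (n : ℤ) : F (-n) = (n + 1).negOnePow * F n := by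
  have := eq_of_linear_recurrence (c := -k) (G := fun n ↦ F (-n))
    (H := fun n ↦ ((n + 1).negOnePow : ℤ) * F n)
    (fun n ↦ by
      have := hF.succ (-n)
      rw [neg_add_eq_sub] at this
      rw [neg_add, ← sub_eq_add_neg, neg_sub]
      linear_combination -this)
    (fun n ↦ by
      simp only [hF.succ n, Int.negOnePow_succ, sub_add_cancel]
      push_cast; ring)
    (by simp [hF.zero]) (by simp [hF.neg_one, hF.one, Int.negOnePow_even 2 even_two])
  exact congrFun this n

theorem associated_neg (n : ℤ) : Associated (F (-n)) (F n) :=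
  Associated.symm ⟨(n + 1).negOnePow, by rw [hF.neg, mul_comm]⟩

theorem pos (hk : 0 < k) {n : ℤ} (hn : 0 < n) : 0 < F n := by
  have hnat : ∀ m : ℕ, 0 ≤ F m ∧ 0 < F (m + 1) := by
    intro m
    induction m with
    | zero => simp [hF.zero, hF.one]
    | succ m ih =>
      have h := hF.succ (m + 1)
      push_cast at h ⊢
      rw [add_sub_cancel_right] at h
      exact ⟨ih.2.le, by nlinarith [ih.1, ih.2]⟩
  obtain ⟨m, rfl⟩ : ∃ m : ℕ, n = m + 1 := ⟨(n - 1).toNat, by omega⟩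
  exact (hnat m).2

theorem ne_zero (hk : 0 < k) {n : ℤ} (hn : n ≠ 0) : F n ≠ 0 := by
  rcases hn.lt_or_gt with hn | hn
  · rw [← (hF.associated_neg n).ne_zero_iff]
    exact (hF.pos hk (neg_pos.2 hn)).ne'
  · exact (hF.pos hk hn).ne'

theorem binet {K : Type*} [Field K] {φ ψ : K} (hsum : φ + ψ = k) (hprod : φ * ψ = -1)
    (n : ℤ) :
    (F n : K) * (φ - ψ) = φ ^ n - ψ ^ n := by
  have hrec {x y : K} (hxy : x + y = k) (hxy' : x * y = -1) (n : ℤ) :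
      x ^ (n + 1) = k * x ^ n + x ^ (n - 1) := by
    have hx : x ≠ 0 := by rintro rfl; simp at hxy'
    rw [← hxy, show n + 1 = n - 1 + 2 by ring, show n = n - 1 + 1 by ring, zpow_add₀ hx,
      zpow_add₀ hx, sub_add_cancel]
    simp only [zpow_ofNat]
    linear_combination (-x ^ (n - 1)) * hxy'
  have := eq_of_linear_recurrence (c := (k : K)) (G := fun n ↦ (F n : K) * (φ - ψ))
    (H := fun n ↦ φ ^ n - ψ ^ n)
    (fun n ↦ by simp only [hF.succ n]; push_cast; ring)
    (fun n ↦ by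
      simp only [hrec hsum hprod, hrec ((add_comm ψ φ).trans hsum) ((mul_comm ψ φ).trans hprod)]
      ring)
    (by simp [hF.zero]) (by simp [hF.one])
  exact congrFun this n

theorem fibonorial_dvd_prod (r : ℕ) {a : ℤ} (ha : 0 ≤ a) :
    fibonorial F r ∣ ∏ t ∈ range r, F (a + t) := by
  induction r generalizing a with
  | zero => simp [fibonorial]
  | succ r ihr =>
    induction a, ha using Int.leInduction with
    | base =>
      rw [prod_eq_zero (i := 0) (mem_range.2 r.succ_pos) (by simp [hF.zero])]
      exact dvd_zero _
    | succ a ha iha =>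
      have hlast : ∏ t ∈ range (r + 1), F (a + 1 + t)
          = (∏ t ∈ range r, F (a + 1 + t)) * (F (r + 1) * F (a + 1) + F r * F a) := by
        rw [prod_range_succ, add_comm (a + 1) (r : ℤ), hF.add, add_sub_cancel_right]
      have hfirst :
          ∏ t ∈ range (r + 1), F (a + t) = F a * ∏ t ∈ range r, F (a + 1 + t) := by
        rw [prod_range_succ', mul_comm]
        push_cast
        simp only [add_zero, add_assoc, add_comm (1 : ℤ)]
      rw [hlast, mul_add]
      refine dvd_add ?_ ?_
      · rw [fibonorial, prod_range_succ]
        exact mul_dvd_mul (ihr (by omega)) (dvd_mul_right _ _)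
      · rw [show (∏ t ∈ range r, F (a + 1 + t)) * (F r * F a)
            = F r * (F a * ∏ t ∈ range r, F (a + 1 + t)) by ring, ← hfirst]
        exact iha.mul_left _

theorem fibonorial_mul_dvd_prod (m l : ℕ) {a : ℤ} (ha : 0 ≤ a) :
    fibonorial F m * fibonorial F l ∣ ∏ t ∈ range (m + l), F (a + t) := by
  rw [prod_range_add]
  refine mul_dvd_mul (hF.fibonorial_dvd_prod m ha) ?_
  simpa only [Nat.cast_add, add_assoc] using hF.fibonorial_dvd_prod l (a := a + m) (by omega)

variable {n : ℕ}

theorem nodeProd_associated (i : ℕ) (x : ℤ) :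
    Associated (nodeProd F n i x) (shiftProdErase F n i (-x)) :=
  Associated.prod _ _ _ fun t _ ↦ by
    simpa only [neg_add, neg_neg, ← sub_eq_add_neg] using hF.associated_neg (-x + t)

theorem shiftProdErase_neg_associated {m : ℕ} (hm : m ≤ n) :
    Associated (shiftProdErase F n m (-m)) (fibonorial F m * fibonorial F (n - m)) := by
  rw [shiftProdErase, prod_range_succ_erase _ hm]
  refine Associated.mul_mul ?_ (.of_eq (prod_congr rfl fun t _ ↦ by congr 1; push_cast; ring))
  rw [fibonorial, ← prod_range_reflect]
  refine Associated.prod _ _ _ fun t ht ↦ ?_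
  have htm : t < m := mem_range.1 ht
  rw [show -(m : ℤ) + ↑(m - 1 - t) = -(t + 1) by omega]
  exact hF.associated_neg _

theorem fibonorial_mul_dvd_shiftProdErase {i : ℕ} (hi : i ≤ n) {a : ℤ} (ha : 0 ≤ a) :
    fibonorial F i * fibonorial F (n - i) ∣ shiftProdErase F n i a := by
  rw [shiftProdErase, prod_range_succ_erase _ hi]
  refine mul_dvd_mul (hF.fibonorial_dvd_prod i ha) ?_
  simpa only [Nat.cast_add, Nat.cast_one, add_assoc] using
    hF.fibonorial_dvd_prod (n - i) (a := a + (i + 1)) (by omega)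

theorem fibonorial_mul_dvd_shiftProd {m : ℕ} (hm : m ≤ n) {a : ℤ} (ha : 0 ≤ a) :
    fibonorial F m * fibonorial F (n - m) ∣ shiftProd F n a := by
  obtain ⟨l, rfl⟩ := Nat.exists_eq_add_of_le hm
  rw [shiftProd, prod_range_succ, Nat.add_sub_cancel_left]
  exact (hF.fibonorial_mul_dvd_prod m l ha).mul_right _

theorem hankelInvEntry_dvd {α : ℤ} (hα : 0 ≤ α) {i m : ℕ} (hi : i ≤ n) (hm : m ≤ n) :
    nodeProd F n i i * shiftProdErase F n m (-m) ∣
      shiftProd F n (α + i) * nodeProd F n i (-α - m) := by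
  have hQ := (hF.nodeProd_associated i i).trans (hF.shiftProdErase_neg_associated hi)
  have hQ' : Associated (nodeProd F n i (-α - m)) (shiftProdErase F n i (α + m)) := by
    simpa only [neg_sub', neg_neg, sub_neg_eq_add] using hF.nodeProd_associated (n := n) i (-α - m)
  rw [(hQ.mul_mul (hF.shiftProdErase_neg_associated hm)).dvd_iff_dvd_left,
    ((Associated.refl _).mul_mul hQ').dvd_iff_dvd_right, mul_comm]
  exact mul_dvd_mul (hF.fibonorial_mul_dvd_shiftProd hm (by omega))
    (hF.fibonorial_mul_dvd_shiftProdErase hi (by omega))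

theorem shiftProdErase_neg_eq_zero {m j : ℕ} (hj : j ≤ n) (hmj : m ≠ j) :
    shiftProdErase F n m (-j) = 0 :=
  prod_eq_zero (mem_erase.2 ⟨hmj.symm, mem_range.2 (by omega)⟩) (by simp [hF.zero])

theorem nodeProd_eq_zero {i j : ℕ} (hj : j ≤ n) (hij : i ≠ j) : nodeProd F n i j = 0 :=
  prod_eq_zero (mem_erase.2 ⟨hij.symm, mem_range.2 (by omega)⟩) (by simp [hF.zero])

section ExpSpan

variable {K : Type*} [Field K] {φ ψ : K}
  (hsum : φ + ψ = k) (hprod : φ * ψ = -1) (hne : φ ≠ ψ)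
include hsum hprod hne

theorem shift_mem_expSpan (c : ℤ) : (fun x ↦ (F (c + x) : K)) ∈ expSpan φ ψ 1 := by
  have hφ : φ ≠ 0 := by rintro rfl; simp at hprod
  have hψ : ψ ≠ 0 := by rintro rfl; simp at hprod
  have hfun : (fun x ↦ (F (c + x) : K)) =
      (φ ^ c / (φ - ψ)) • (fun x : ℤ ↦ φ ^ x) -
        (ψ ^ c / (φ - ψ)) • (fun x : ℤ ↦ ψ ^ x) := by
    funext x
    have := hF.binet hsum hprod (c + x)
    rw [zpow_add₀ hφ, zpow_add₀ hψ] at this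
    simp only [Pi.sub_apply, Pi.smul_apply, smul_eq_mul]
    field_simp [sub_ne_zero.2 hne]
    linear_combination this
  rw [hfun]
  exact sub_mem (Submodule.smul_mem _ _ (Submodule.subset_span ⟨1, funext fun x ↦ by simp⟩))
    (Submodule.smul_mem _ _ (Submodule.subset_span ⟨0, funext fun x ↦ by simp⟩))

theorem prod_shift_mem_expSpan {ι : Type*} (s : Finset ι) (c : ι → ℤ) :
    (fun x ↦ ∏ t ∈ s, (F (c t + x) : K)) ∈ expSpan φ ψ #s := by
  simpa only [Finset.prod_fn] using
    prod_mem_expSpan s fun t _ ↦ hF.shift_mem_expSpan hsum hprod hne (c t)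

theorem shiftProdErase_mem_expSpan {m : ℕ} (hm : m ≤ n) (a : ℤ) :
    (fun x ↦ (shiftProdErase F n m (a + x) : K)) ∈ expSpan φ ψ n := by
  have := hF.prod_shift_mem_expSpan hsum hprod hne ((range (n + 1)).erase m) fun t ↦ a + t
  rw [card_erase_of_mem (mem_range.2 (by omega)), card_range, Nat.add_sub_cancel] at this
  convert this using 2 with x
  simp only [shiftProdErase, Int.cast_prod, add_right_comm]

theorem nodeProd_mem_expSpan {i : ℕ} (hi : i ≤ n) :
    (fun x ↦ (nodeProd F n i x : K)) ∈ expSpan φ ψ n := by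
  have := hF.prod_shift_mem_expSpan hsum hprod hne ((range (n + 1)).erase i) fun t ↦ -(t : ℤ)
  rw [card_erase_of_mem (mem_range.2 (by omega)), card_range, Nat.add_sub_cancel] at this
  convert this using 2 with x
  simp only [nodeProd, Int.cast_prod, neg_add_eq_sub]

end ExpSpan

section Interpolation

variable (hk : 0 < k) {α : ℤ}
include hk

theorem shiftProd_ne_zero {x : ℤ} (hx : 0 < x) : shiftProd F n x ≠ 0 :=
  prod_ne_zero_iff.2 fun _ _ ↦ hF.ne_zero hk (by omega)

theorem shiftProdErase_neg_self_ne_zero (m : ℕ) : shiftProdErase F n m (-m) ≠ 0 :=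
  prod_ne_zero_iff.2 fun t ht ↦ hF.ne_zero hk (by have := (mem_erase.1 ht).1; omega)

theorem nodeProd_self_ne_zero (i : ℕ) : nodeProd F n i i ≠ 0 :=
  prod_ne_zero_iff.2 fun t ht ↦ hF.ne_zero hk (by have := (mem_erase.1 ht).1; omega)

theorem cast_hankelInvEntry {K : Type*} [Field K] [CharZero K] (hα : 0 ≤ α) {i m : ℕ}
    (hi : i ≤ n) (hm : m ≤ n) :
    (hankelInvEntry F n α i m : K) = shiftProd F n (α + i) * nodeProd F n i (-α - m) /
      (nodeProd F n i i * shiftProdErase F n m (-m)) := by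
  rw [hankelInvEntry, Int.cast_div (hF.hankelInvEntry_dvd hα hi hm), Int.cast_mul, Int.cast_mul]
  exact_mod_cast mul_ne_zero (hF.nodeProd_self_ne_zero hk i)
    (hF.shiftProdErase_neg_self_ne_zero hk m)

theorem sum_hankelInvEntry_mul_shiftProdErase (hα : 0 ≤ α) {i : ℕ} (hi : i ≤ n) (x : ℤ) :
    ∑ m ∈ range (n + 1), (hankelInvEntry F n α i m : ℝ) * shiftProdErase F n m (α + x) =
      shiftProd F n (α + i) / nodeProd F n i i * nodeProd F n i x := by
  obtain ⟨φ, ψ, hsum, hprod⟩ := exists_add_eq_mul_eq_neg_one k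
  have hφ : φ ≠ 0 := by rintro rfl; simp at hprod
  have hψ : ψ ≠ 0 := by rintro rfl; simp at hprod
  have hne : φ ≠ ψ := by rintro rfl; nlinarith [mul_self_nonneg φ]
  set D : ℤ → ℝ := ∑ m ∈ range (n + 1), (hankelInvEntry F n α i m : ℝ) •
      (fun x ↦ (shiftProdErase F n m (α + x) : ℝ)) -
    (shiftProd F n (α + i) / nodeProd F n i i : ℝ) • fun x ↦ (nodeProd F n i x : ℝ) with hD
  have hmem : D ∈ expSpan φ ψ n :=
    sub_mem (Submodule.sum_mem _ fun m hm ↦ Submodule.smul_mem _ _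
        (hF.shiftProdErase_mem_expSpan hsum hprod hne (Nat.le_of_lt_succ (mem_range.1 hm)) α))
      (Submodule.smul_mem _ _ (hF.nodeProd_mem_expSpan hsum hprod hne hi))
  have hzero (t : Fin (n + 1)) : D (-α - n + t) = 0 := by
    obtain ⟨j, hj, hjt⟩ : ∃ j : ℕ, j ≤ n ∧ -α - n + (t : ℕ) = -α - j :=
      ⟨n - t, by omega, by omega⟩
    have hRj := hF.shiftProdErase_neg_self_ne_zero (n := n) hk j
    have hNi := hF.nodeProd_self_ne_zero (n := n) hk i
    rw [hjt, hD, Pi.sub_apply, Finset.sum_apply]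
    simp only [Pi.smul_apply, smul_eq_mul, show α + (-α - j) = -j by ring]
    rw [sum_eq_single j]
    · rw [hF.cast_hankelInvEntry hk hα hi hj]
      field_simp
      ring
    · intro m _ hmj
      simp [hF.shiftProdErase_neg_eq_zero hj hmj]
    · simp [hj]
  have hD₀ : D = 0 :=
    eq_zero_of_mem_span_zpow (injective_pow_mul_pow hprod (hsum ▸ Int.cast_ne_zero.2 hk.ne') n)
      (fun a ↦ mul_ne_zero (pow_ne_zero _ hφ) (pow_ne_zero _ hψ)) hmem hzero
  simpa [hD, sub_eq_zero] using congrFun hD₀ x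

theorem sum_hankelInvEntry_div (hα : 0 < α) {i j : ℕ} (hi : i ≤ n) (hj : j ≤ n) :
    ∑ m ∈ range (n + 1), (hankelInvEntry F n α i m : ℝ) / F (α + m + j) =
      if i = j then 1 else 0 := by
  have hPj : (shiftProd F n (α + j) : ℝ) ≠ 0 := by
    exact_mod_cast hF.shiftProd_ne_zero hk (by omega)
  have hsum : (∑ m ∈ range (n + 1), (hankelInvEntry F n α i m : ℝ) / F (α + m + j)) *
      shiftProd F n (α + j) = shiftProd F n (α + i) / nodeProd F n i i * nodeProd F n i j := by
    rw [← hF.sum_hankelInvEntry_mul_shiftProdErase hk hα.le hi, sum_mul]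
    refine sum_congr rfl fun m hm ↦ ?_
    have hFm : (F (α + m + j) : ℝ) ≠ 0 := by exact_mod_cast hF.ne_zero hk (by omega)
    have hsplit :
        (shiftProd F n (α + j) : ℝ) = F (α + m + j) * shiftProdErase F n m (α + j) := by
      rw [shiftProd, ← mul_prod_erase _ _ hm, add_right_comm, shiftProdErase, Int.cast_mul]
    rw [hsplit]
    field_simp
  split_ifs with hij
  · subst hij
    rw [div_mul_cancel₀ _ (by exact_mod_cast hF.nodeProd_self_ne_zero hk i)] at hsum
    exact (mul_eq_right₀ hPj).1 hsum
  · rw [hF.nodeProd_eq_zero hj hij, Int.cast_zero, mul_zero] at hsum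
    exact (mul_eq_zero.1 hsum).resolve_right hPj

end Interpolation

end IsKFibonacci

theorem hankel_inverse_integer_entries (k : ℤ) (hk : 1 ≤ k) (F : ℤ → ℤ)
    (hF0 : F 0 = 0) (hF1 : F 1 = 1)
    (hFrec : ∀ n : ℤ, F (n + 1) = k * F n + F (n - 1))
    (α : ℤ) (hα : 1 ≤ α) (n : ℕ)
    (A : Matrix (Fin (n + 1)) (Fin (n + 1)) ℚ)
    (hA : ∀ j m : Fin (n + 1), A j m = (1 : ℚ) / (F (α + (j : ℕ) + (m : ℕ)) : ℚ)) :
    IsUnit A ∧ ∃ B : Matrix (Fin (n + 1)) (Fin (n + 1)) ℤ,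
      A⁻¹ = B.map (Int.cast : ℤ → ℚ) := by
  have hF : IsKFibonacci k F := ⟨hF0, hF1, hFrec⟩
  let B : Matrix (Fin (n + 1)) (Fin (n + 1)) ℤ := Matrix.of fun i m ↦ hankelInvEntry F n α i m
  have hBA : B.map (Int.cast : ℤ → ℚ) * A = 1 := by
    ext i j
    apply Rat.cast_injective (α := ℝ)
    have := hF.sum_hankelInvEntry_div hk hα (Nat.le_of_lt_succ i.isLt) (Nat.le_of_lt_succ j.isLt)
    rw [← Fin.sum_univ_eq_sum_range
      (fun m ↦ (hankelInvEntry F n α i m : ℝ) / F (α + m + j))] at this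
    simpa [Matrix.mul_apply, Matrix.one_apply, hA, B, div_eq_mul_inv, Fin.val_inj,
      apply_ite (Rat.cast : ℚ → ℝ)] using this
  exact ⟨(Matrix.isUnit_iff_isUnit_det A).2 (Matrix.isUnit_det_of_left_inverse hBA), B,
    Matrix.inv_eq_left_inv hBA⟩
end

section
/- For every integer n ≥ 1, the finite sum of reciprocals ∑_{j=0}^{n} 1/F_{2^j} (as rational numbers) equals (k + 2)/k − F_{2^n − 1}/F_{2^n}. -/
/-!
For even `m`, the doubling formulas `F (2m-1) = F m ^ 2 + F (m-1) ^ 2`,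
`F (2m) = F m * (F (m+1) + F (m-1))` and Cassini's identity
`F (m+1) * F (m-1) - F m ^ 2 = (-1) ^ m = 1` give
`F (m-1) / F m - F (2m-1) / F (2m) = 1 / F (2m)`.
With `m = 2 ^ j` the sum therefore telescopes.
-/

open Finset

theorem Int.sum_Icc_zero_natCast {M : Type*} [AddCommMonoid M] (f : ℕ → M) (N : ℕ) :
    ∑ j ∈ Icc (0 : ℤ) N, f j.toNat = ∑ j ∈ Finset.range (N + 1), f j := by
  rw [Int.Icc_eq_finset_map, sum_map]
  simp

structure IsGenFib {R : Type*} [CommRing R] (k : R) (u : ℕ → R) : Prop where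
  zero : u 0 = 0
  one : u 1 = 1
  add_two : ∀ n, u (n + 2) = k * u (n + 1) + u n

namespace IsGenFib

section CommRing

variable {R : Type*} [CommRing R] {k : R} {u : ℕ → R}

theorem two (h : IsGenFib k u) : u 2 = k := by
  simpa [h.zero, h.one] using h.add_two 0

theorem add_add_one (h : IsGenFib k u) (m n : ℕ) :
    u (m + n + 1) = u (m + 1) * u (n + 1) + u m * u n := by
  induction n generalizing m with
  | zero => simp [h.zero, h.one]
  | succ n ih =>
    rw [show m + (n + 1) + 1 = (m + 1) + n + 1 by ring, ih, h.add_two m, h.add_two n]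
    ring

theorem cassini (h : IsGenFib k u) (n : ℕ) :
    u (n + 2) * u n - u (n + 1) ^ 2 = (-1) ^ (n + 1) := by
  induction n with
  | zero => simp [h.zero, h.one]
  | succ n ih =>
    rw [h.add_two (n + 1)]
    linear_combination -ih - u (n + 2) * h.add_two n

theorem two_mul_add_one (h : IsGenFib k u) (n : ℕ) :
    u (2 * n + 1) = u (n + 1) ^ 2 + u n ^ 2 := by
  rw [two_mul, h.add_add_one]
  ring

theorem two_mul_add_two (h : IsGenFib k u) (n : ℕ) :
    u (2 * n + 2) = u (n + 1) * (u (n + 2) + u n) := by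
  rw [show 2 * n + 2 = (n + 1) + n + 1 by ring, h.add_add_one]
  ring

theorem mul_two_mul_add_two_sub (h : IsGenFib k u) (n : ℕ) :
    u n * u (2 * n + 2) - u (2 * n + 1) * u (n + 1) = (-1) ^ (n + 1) * u (n + 1) := by
  rw [h.two_mul_add_two, h.two_mul_add_one, ← h.cassini]
  ring

end CommRing

theorem pos {R : Type*} [CommRing R] [LinearOrder R] [IsStrictOrderedRing R] {k : R}
    {u : ℕ → R} (h : IsGenFib k u) (hk : 0 < k) (n : ℕ) : 0 < u (n + 1) := by
  suffices 0 ≤ u n ∧ 0 < u (n + 1) from this.2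
  induction n with
  | zero => simp [h.zero, h.one]
  | succ n ih =>
    obtain ⟨hn, hn₁⟩ := ih
    refine ⟨hn₁.le, ?_⟩
    rw [h.add_two]
    positivity

theorem div_sub_div_of_even {K : Type*} [Field K] {k : K} {u : ℕ → K} (h : IsGenFib k u)
    {n : ℕ} (hn : Even (n + 1)) (h₁ : u (n + 1) ≠ 0) (h₂ : u (2 * n + 2) ≠ 0) :
    u n / u (n + 1) - u (2 * n + 1) / u (2 * n + 2) = 1 / u (2 * n + 2) := by
  field_simp
  linear_combination h.mul_two_mul_add_two_sub n + u (n + 1) * hn.neg_one_pow (α := K)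

theorem sum_range_one_div_pow_two {K : Type*} [Field K] [LinearOrder K] [IsStrictOrderedRing K]
    {k : K} {u : ℕ → K} (h : IsGenFib k u) (hk : 0 < k) {N : ℕ} (hN : 1 ≤ N) :
    ∑ j ∈ Finset.range (N + 1), 1 / u (2 ^ j) = (k + 2) / k - u (2 ^ N - 1) / u (2 ^ N) := by
  induction N, hN using Nat.le_induction with
  | base =>
    simp only [Nat.reduceAdd, one_div, sum_range_succ, range_one, sum_singleton, pow_zero, h.one,
      inv_one, pow_one, h.two, Nat.add_one_sub_one]
    field_simp
    ring
  | succ N hN ih =>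
    obtain ⟨m, hm⟩ : ∃ m, 2 ^ N = m + 1 := ⟨2 ^ N - 1, by have := N.one_le_two_pow; omega⟩
    have hm' : 2 ^ (N + 1) = 2 * m + 2 := by rw [pow_succ, hm]; ring
    have heven : Even (m + 1) := hm ▸ Nat.even_pow.2 ⟨even_two, by omega⟩
    rw [sum_range_succ, ih, hm, hm', Nat.add_sub_cancel, show 2 * m + 2 - 1 = 2 * m + 1 by omega,
      ← h.div_sub_div_of_even heven (h.pos hk m).ne' (h.pos hk (2 * m + 1)).ne']
    ring

end IsGenFib

theorem gen_fib_sum_reciprocals (k : ℤ) (hk : 1 ≤ k) (F : ℤ → ℤ)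
    (hF0 : F 0 = 0) (hF1 : F 1 = 1)
    (hFrec : ∀ n : ℤ, F (n + 1) = k * F n + F (n - 1)) :
    ∀ n : ℤ, 1 ≤ n →
      ∑ j ∈ Finset.Icc (0 : ℤ) n, (1 : ℚ) / (F (2 ^ j.toNat) : ℚ) =
        ((k : ℚ) + 2) / (k : ℚ) -
          (F (2 ^ n.toNat - 1) : ℚ) / (F (2 ^ n.toNat) : ℚ) := by
  intro n hn
  lift n to ℕ using by omega
  set u : ℕ → ℚ := fun m => (F m : ℚ)
  have hu : IsGenFib (k : ℚ) u :=
    { zero := by simp [u, hF0]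
      one := by simp [u, hF1]
      add_two := fun m => by
        have := hFrec (m + 1)
        simp only [u, add_sub_cancel_right] at this ⊢
        push_cast [add_assoc] at this ⊢
        exact_mod_cast this }
  have hk' : (0 : ℚ) < k := by exact_mod_cast hk
  have hsub : ((2 ^ n - 1 : ℕ) : ℤ) = 2 ^ n - 1 := by
    push_cast [Nat.one_le_two_pow]
    ring
  have key := hu.sum_range_one_div_pow_two hk' (N := n) (by exact_mod_cast hn)
  rw [← Int.sum_Icc_zero_natCast (fun j => 1 / u (2 ^ j))] at key
  simpa [u, hsub] using key
end
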